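/- There is no self-adjoint dephased complex Hadamard matrix H ∈ M₆(ℂ) whose diagonal is (1, −1, 1, 1, 1, 1). -/

import Mathlib

open Complex Matrix ComplexConjugate

/-!
A self-adjoint Hadamard matrix of order `n` satisfies `H² = H Hᴴ = n • 1`, so each of its (real)
eigenvalues is `±√n` and its trace is an integer multiple of `√n`. The prescribed diagonal has
trace `4`, and `4 = k √6` would give `3 k² = 8` in `ℤ`.
-/

/-- A complex Hadamard matrix of order `n`: all entries of absolute value 1
and pairwise orthogonal rows, i.e. `H Hᴴ = n·1`. -/
def IsHadamard {n : ℕ} (H : Matrix (Fin n) (Fin n) ℂ) : Prop :=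
  (∀ i j, ‖H i j‖ = 1) ∧ H * Hᴴ = (n : ℂ) • 1

/-- A matrix is dephased if its first row and first column consist of 1's. -/
def IsDephased {n : ℕ} [NeZero n] (H : Matrix (Fin n) (Fin n) ℂ) : Prop :=
  ∀ k, H 0 k = 1 ∧ H k 0 = 1

lemma Real.exists_int_sum_eq_mul_sqrt {ι : Type*} (s : Finset ι) {f : ι → ℝ} {c : ℝ}
    (hf : ∀ i ∈ s, f i ^ 2 = c) : ∃ k : ℤ, ∑ i ∈ s, f i = k * √c := by
  refine Finset.sum_induction f (fun x ↦ ∃ k : ℤ, x = k * √c) ?_ ⟨0, by simp⟩ fun i hi ↦ ?_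
  · rintro _ _ ⟨k, rfl⟩ ⟨l, rfl⟩
    exact ⟨k + l, by push_cast; ring⟩
  · have habs : |f i| = √c := by rw [← Real.sqrt_sq_eq_abs, hf i hi]
    rcases (abs_eq (Real.sqrt_nonneg c)).mp habs with h | h
    · exact ⟨1, by simp [h]⟩
    · exact ⟨-1, by simp [h]⟩

namespace Matrix.IsHermitian

variable {𝕜 n : Type*} [RCLike 𝕜] [Fintype n] [DecidableEq n] {A : Matrix n n 𝕜}

lemma eigenvalues_sq_of_mul_self_eq_smul_one (hA : A.IsHermitian) {c : ℝ}
    (h : A * A = (c : 𝕜) • 1) (i : n) : hA.eigenvalues i ^ 2 = c := by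
  set v := ⇑(hA.eigenvectorBasis i)
  have hv : v ≠ 0 := (WithLp.ofLp_eq_zero 2).ne.2 <| hA.eigenvectorBasis.orthonormal.ne_zero i
  have hAAv : (A * A) *ᵥ v = ((hA.eigenvalues i : 𝕜) ^ 2) • v := by
    rw [← mulVec_mulVec, hA.mulVec_eigenvectorBasis, mulVec_smul, hA.mulVec_eigenvectorBasis,
      smul_smul, RCLike.real_smul_eq_coe_smul (K := 𝕜), RCLike.ofReal_mul, sq]
  rw [h, smul_mulVec, one_mulVec] at hAAv
  exact_mod_cast (smul_left_injective 𝕜 hv hAAv).symm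

lemma exists_int_trace_eq_mul_sqrt (hA : A.IsHermitian) {c : ℝ} (h : A * A = (c : 𝕜) • 1) :
    ∃ k : ℤ, A.trace = ((k * √c : ℝ) : 𝕜) := by
  obtain ⟨k, hk⟩ := Real.exists_int_sum_eq_mul_sqrt Finset.univ fun i _ ↦
    hA.eigenvalues_sq_of_mul_self_eq_smul_one h i
  exact ⟨k, by rw [hA.trace_eq_sum_eigenvalues, ← hk]; push_cast; rfl⟩

end Matrix.IsHermitian

/-- There is no self-adjoint dephased complex Hadamard matrix in
M₆(ℂ) whose diagonal is (1, (-1), 1, 1, 1, 1). -/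
theorem no_selfAdjoint_dephased_diag_stmt8 :
    ¬ ∃ H : Matrix (Fin 6) (Fin 6) ℂ,
      _root_.IsHadamard H ∧ Hᴴ = H ∧ IsDephased H ∧
      H 0 0 = 1 ∧ H 1 1 = (-1) ∧ H 2 2 = 1 ∧
      H 3 3 = 1 ∧ H 4 4 = 1 ∧ H 5 5 = 1 := by
  rintro ⟨H, ⟨-, hmul⟩, hherm, -, h00, h11, h22, h33, h44, h55⟩
  have hsq : H * H = ((6 : ℝ) : ℂ) • 1 := by rw [hherm] at hmul; exact_mod_cast hmul
  have htrace : H.trace = 4 := by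
    simp only [trace, diag, Fin.sum_univ_six, h00, h11, h22, h33, h44, h55]
    norm_num
  obtain ⟨k, hk⟩ := IsHermitian.exists_int_trace_eq_mul_sqrt (c := 6) hherm hsq
  have hreal : (4 : ℝ) = k * √6 := Complex.ofReal_injective <| by
    rw [Complex.ofReal_ofNat, ← htrace]
    exact hk
  have hint : (8 : ℤ) = 3 * k ^ 2 := by
    have hsquared := congrArg (· ^ 2) hreal
    simp only [mul_pow, Real.sq_sqrt (by norm_num : (0 : ℝ) ≤ 6)] at hsquared
    have hreal_sq : (8 : ℝ) = 3 * (k : ℝ) ^ 2 := by linarith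
    exact_mod_cast hreal_sq
  omega
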